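/- arXiv:2004.11666 — 10 statements merged into one kernel-verified Lean document; each statement's English description precedes it below -/
import Mathlib

section
/- Let e = (u,v) be an edge of G. Suppose there exists a minimum multiterminal cut partition of G in which u and v lie in different blocks. Let G − e be the graph G with edge e removed (all other vertices, edges and weights unchanged). Then 𝒲(G − e) = 𝒲(G) − w(e), and every minimum multiterminal cut partition of G − e places u and v in different blocks and is also a minimum multiterminal cut partition of G. -/
/-- The weight of the multiterminal cut induced by a partition `c` of the
vertices into `k` blocks: the total weight of (unordered) edges whose
endpoints lie in different blocks. -/
def mtcWeight {V : Type*} [Fintype V] [DecidableEq V] {k : ℕ}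
    (w : Sym2 V → ℕ) (c : V → Fin k) : ℕ :=
  ∑ p ∈ Finset.univ.sym2, if (Sym2.map c p).IsDiag then 0 else w p

/-- The minimum multiterminal cut weight `𝒲(G)` for terminals `t`. -/
noncomputable def minMTC {V : Type*} [Fintype V] [DecidableEq V] {k : ℕ}
    (w : Sym2 V → ℕ) (t : Fin k → V) : ℕ :=
  sInf {n | ∃ c : V → Fin k, (∀ i, c (t i) = i) ∧ mtcWeight w c = n}

lemma mtc_split {V : Type*} [Fintype V] [DecidableEq V] {k : ℕ}
    (w : Sym2 V → ℕ) (u v : V) (c : V → Fin k) :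
    mtcWeight w c
      = mtcWeight (fun p => if p = s(u, v) then 0 else w p) c
        + (if c u = c v then 0 else w s(u, v)) := by
  classical
  have hmem : s(u,v) ∈ (Finset.univ : Finset V).sym2 := by
    simp [Finset.mk_mem_sym2_iff]
  unfold mtcWeight
  rw [← Finset.sum_erase_add _ _ hmem, ← Finset.sum_erase_add _ _ hmem]
  rw [add_assoc]
  congr 1
  · apply Finset.sum_congr rfl
    intro p hp
    have : p ≠ s(u,v) := Finset.ne_of_mem_erase hp
    simp [this]
  · simp [Sym2.map_pair_eq, Sym2.mk_isDiag_iff]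

/-- if some minimum multiterminal cut partition of `G` places the
endpoints `u, v` of the edge `e = (u,v)` in different blocks, then for the graph
`G - e` (edge `e` deleted, i.e. its weight set to `0`) we have
`𝒲(G - e) = 𝒲(G) - w(e)`, and every minimum multiterminal cut partition of
`G - e` places `u` and `v` in different blocks and is also a minimum
multiterminal cut partition of `G`. -/
theorem deletion_of_cut_edge
    {V : Type*} [Fintype V] [DecidableEq V] {k : ℕ} (hk : 2 ≤ k)
    (w : Sym2 V → ℕ) (hloopless : ∀ x, w (Sym2.diag x) = 0)
    (t : Fin k → V) (ht : Function.Injective t)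
    (u v : V) (huv : u ≠ v) (he : 0 < w s(u, v))
    (hmin : ∃ c : V → Fin k, (∀ i, c (t i) = i) ∧ c u ≠ c v ∧
      mtcWeight w c = minMTC w t) :
    minMTC (fun p => if p = s(u, v) then 0 else w p) t = minMTC w t - w s(u, v) ∧
    ∀ c : V → Fin k, (∀ i, c (t i) = i) →
      mtcWeight (fun p => if p = s(u, v) then 0 else w p) c
        = minMTC (fun p => if p = s(u, v) then 0 else w p) t →
      c u ≠ c v ∧ mtcWeight w c = minMTC w t := by
  classical
  obtain ⟨c₀, ht₀, hne₀, hmin₀⟩ := hmin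
  have hlb : ∀ c : V → Fin k, (∀ i, c (t i) = i) → minMTC w t ≤ mtcWeight w c := by
    intro c hc
    exact Nat.sInf_le ⟨c, hc, rfl⟩
  have hsplit₀ := mtc_split w u v c₀
  rw [if_neg hne₀, hmin₀] at hsplit₀
  have hwle : w s(u, v) ≤ minMTC w t := by omega
  have hc₀' : mtcWeight (fun p => if p = s(u, v) then 0 else w p) c₀
      = minMTC w t - w s(u, v) := by omega
  have hlb' : ∀ c : V → Fin k, (∀ i, c (t i) = i) →
      minMTC w t - w s(u, v)
        ≤ mtcWeight (fun p => if p = s(u, v) then 0 else w p) c := by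
    intro c hc
    have hs := mtc_split w u v c
    have hM' := hlb c hc
    by_cases h : c u = c v
    · rw [if_pos h] at hs; omega
    · rw [if_neg h] at hs; omega
  have hmin' : minMTC (fun p => if p = s(u, v) then 0 else w p) t
      = minMTC w t - w s(u, v) := by
    apply le_antisymm
    · exact Nat.sInf_le ⟨c₀, ht₀, hc₀'⟩
    · exact le_csInf ⟨_, c₀, ht₀, hc₀'⟩ (by rintro n ⟨c, hc, rfl⟩; exact hlb' c hc)
  refine ⟨hmin', ?_⟩
  intro c hc hceq
  rw [hmin'] at hceq
  have hs := mtc_split w u v c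
  have hM' := hlb c hc
  have hne : c u ≠ c v := by
    intro h
    rw [if_pos h] at hs
    omega
  rw [if_neg hne] at hs
  exact ⟨hne, by omega⟩
end

section
/- Let φ ∈ V be an articulation point of G, i.e., removing φ disconnects G into connected components G_1, …, G_p with vertex sets V_1, …, V_p, and let G_i be a component containing no terminal vertex. Then in every minimum multiterminal cut partition of G, all vertices of V_i ∪ {φ} lie in the same block; equivalently, no edge with both endpoints in V_i ∪ {φ} belongs to a minimum multiterminal cut. -/
/-- The simple graph underlying the weight function `w`: vertices are adjacent
iff they are distinct and joined by an edge of positive weight. -/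
def wGraph {V : Type*} (w : Sym2 V → ℕ) : SimpleGraph V where
  Adj u v := u ≠ v ∧ 0 < w s(u, v)
  symm := by
    constructor
    intro a b h
    exact ⟨Ne.symm h.1, by rw [Sym2.eq_swap]; exact h.2⟩
  loopless := ⟨fun a h => h.1 rfl⟩


/-! If a minimum cut partition `c` separated some vertex of `S` from `φ`, then, walking from
that vertex to `φ`, some edge at `S` would be cut. Moving all of `S` into the block of `φ`
keeps the terminals in place (none lies in `S`) and cuts no new edge (every edge leaving `S`
ends at `φ`), but uncuts that edge: a cheaper partition, contradicting minimality. -/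

namespace SimpleGraph

variable {V α : Type*} {G : SimpleGraph V} {S : Set V} {φ : V}

theorem adj_mem_insert_of_forall_mem_iff_reachable {x₀ : V} (hx₀ : x₀ ≠ φ)
    (hS : ∀ y : V, y ∈ S ↔ ∃ hy : y ≠ φ,
      (G.induce {x : V | x ≠ φ}).Reachable ⟨y, hy⟩ ⟨x₀, hx₀⟩) :
    ∀ y ∈ S, ∀ z, G.Adj y z → z ∈ insert φ S := by
  intro y hy z hyz
  by_cases hz : z = φ
  · exact .inl hz
  obtain ⟨hyφ, hreach⟩ := (hS y).1 hy
  have hzy : (G.induce {x : V | x ≠ φ}).Adj ⟨z, hz⟩ ⟨y, hyφ⟩ := hyz.symm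
  exact .inr ((hS z).2 ⟨hz, hzy.reachable.trans hreach⟩)

/-- A walk can only leave `S` through `φ`. -/
theorem Walk.apply_eq_of_adj_mem_insert (hS : ∀ y ∈ S, ∀ z, G.Adj y z → z ∈ insert φ S)
    {f : V → α} (hf : ∀ y ∈ S, ∀ z, G.Adj y z → f y = f z) :
    ∀ {x z : V} (_ : G.Walk x z), x ∈ S → z ∉ S → f x = f φ
  | _, _, .nil, hx, hz => absurd hx hz
  | x, _, .cons (v := m) hxm q, hx, hz => by
    rw [hf x hx m hxm]
    rcases hS x hx m hxm with rfl | hm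
    · rfl
    · exact q.apply_eq_of_adj_mem_insert hS hf hm hz

theorem piecewise_const_apply_eq_of_adj (hS : ∀ y ∈ S, ∀ z, G.Adj y z → z ∈ insert φ S)
    (hφS : φ ∉ S) [DecidablePred (· ∈ S)] (f : V → α) {u v : V} (hu : u ∈ S)
    (huv : G.Adj u v) :
    S.piecewise (fun _ => f φ) f u = S.piecewise (fun _ => f φ) f v := by
  rw [Set.piecewise_eq_of_mem _ _ _ hu]
  rcases hS u hu v huv with rfl | hv
  · rw [Set.piecewise_eq_of_notMem _ _ _ hφS]
  · rw [Set.piecewise_eq_of_mem _ _ _ hv]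

theorem piecewise_const_apply_eq_of_apply_eq
    (hS : ∀ y ∈ S, ∀ z, G.Adj y z → z ∈ insert φ S) (hφS : φ ∉ S) [DecidablePred (· ∈ S)]
    (f : V → α) {u v : V} (huv : G.Adj u v) (h : f u = f v) :
    S.piecewise (fun _ => f φ) f u = S.piecewise (fun _ => f φ) f v := by
  by_cases hu : u ∈ S
  · exact piecewise_const_apply_eq_of_adj hS hφS f hu huv
  by_cases hv : v ∈ S
  · exact (piecewise_const_apply_eq_of_adj hS hφS f hv huv.symm).symm
  rwa [Set.piecewise_eq_of_notMem _ _ _ hu, Set.piecewise_eq_of_notMem _ _ _ hv]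

end SimpleGraph

section MultiterminalCut

variable {V : Type*} {k : ℕ} {w : Sym2 V → ℕ}

theorem minMTC_le_mtcWeight [Fintype V] [DecidableEq V] {t : Fin k → V} {c : V → Fin k}
    (hc : ∀ i, c (t i) = i) :
    minMTC w t ≤ mtcWeight w c :=
  Nat.sInf_le ⟨c, hc, rfl⟩

theorem cutTerm_le_of_forall_adj {c c' : V → Fin k}
    (hmono : ∀ u v, (wGraph w).Adj u v → c u = c v → c' u = c' v) (p : Sym2 V) :
    (if (p.map c').IsDiag then 0 else w p) ≤ (if (p.map c).IsDiag then 0 else w p) := by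
  induction p using Sym2.inductionOn with
  | hf u v =>
    simp only [Sym2.map_mk, Sym2.mk_isDiag_iff]
    by_cases huv : (wGraph w).Adj u v
    · split_ifs with h' h h
      exacts [le_rfl, Nat.zero_le _, absurd (hmono u v huv h) h', le_rfl]
    · rcases eq_or_ne u v with rfl | hne
      · simp
      · have hw : w s(u, v) = 0 := by simpa [wGraph, hne] using huv
        split_ifs <;> simp [hw]

theorem mtcWeight_lt_of_forall_adj [Fintype V] [DecidableEq V] {c c' : V → Fin k}
    (hmono : ∀ u v, (wGraph w).Adj u v → c u = c v → c' u = c' v)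
    {u v : V} (huv : (wGraph w).Adj u v) (hc : c u ≠ c v) (hc' : c' u = c' v) :
    mtcWeight w c' < mtcWeight w c := by
  refine Finset.sum_lt_sum (fun p _ => cutTerm_le_of_forall_adj hmono p)
    ⟨s(u, v), Finset.mk_mem_sym2_iff.2 ⟨Finset.mem_univ u, Finset.mem_univ v⟩, ?_⟩
  simp only [Sym2.map_mk, Sym2.mk_isDiag_iff, hc', hc, if_true, if_false]
  exact huv.2

end MultiterminalCut

theorem articulation_point_component_same_block_general
    {V : Type*} [Fintype V] [DecidableEq V] {k : ℕ}
    (w : Sym2 V → ℕ)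
    (t : Fin k → V)
    (hconn : (wGraph w).Connected)
    (φ : V)
    (x₀ : V) (hx₀ : x₀ ≠ φ)
    (S : Set V) (hφS : φ ∉ S)
    (hS : ∀ y : V, y ∈ S ↔ ∃ hy : y ≠ φ,
      (SimpleGraph.induce {x : V | x ≠ φ} (wGraph w)).Reachable ⟨y, hy⟩ ⟨x₀, hx₀⟩)
    (hST : ∀ i, t i ∉ S)
    (c : V → Fin k) (hc : ∀ i, c (t i) = i)
    (hcmin : mtcWeight w c = minMTC w t) :
    ∀ x ∈ S, c x = c φ := by
  classical
  intro x hx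
  by_contra hne
  have hclosed := SimpleGraph.adj_mem_insert_of_forall_mem_iff_reachable hx₀ hS
  obtain ⟨u, hu, v, huv, hcuv⟩ : ∃ u ∈ S, ∃ v, (wGraph w).Adj u v ∧ c u ≠ c v := by
    by_contra! hconst
    exact hne ((hconn.preconnected x φ).some.apply_eq_of_adj_mem_insert hclosed hconst hx hφS)
  set c' := S.piecewise (fun _ => c φ) c
  have hcheaper : mtcWeight w c' < mtcWeight w c :=
    mtcWeight_lt_of_forall_adj
      (fun _ _ => SimpleGraph.piecewise_const_apply_eq_of_apply_eq hclosed hφS c) huv hcuv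
      (SimpleGraph.piecewise_const_apply_eq_of_adj hclosed hφS c hu huv)
  have hc' : ∀ i, c' (t i) = i := fun i => (S.piecewise_eq_of_notMem _ _ (hST i)).trans (hc i)
  have hmin : minMTC w t ≤ mtcWeight w c' := minMTC_le_mtcWeight hc'
  omega

/-- let `φ` be an articulation point of the connected graph `G`,
i.e. removing `φ` disconnects `G`, and let `S` be the vertex set of a
connected component of `G - φ` (the set of vertices reachable from some
`x₀ ≠ φ` in the graph induced on `V \ {φ}`) containing no terminal. Then in
every minimum multiterminal cut partition of `G`, all vertices of `S ∪ {φ}`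
lie in the same block. -/
theorem articulation_point_component_same_block
    {V : Type*} [Fintype V] [DecidableEq V] {k : ℕ} (hk : 2 ≤ k)
    (w : Sym2 V → ℕ) (hloopless : ∀ x, w (Sym2.diag x) = 0)
    (t : Fin k → V) (ht : Function.Injective t)
    (hconn : (wGraph w).Connected)
    (φ : V)
    (hart : ¬ (SimpleGraph.induce {x : V | x ≠ φ} (wGraph w)).Connected)
    (x₀ : V) (hx₀ : x₀ ≠ φ)
    (S : Set V) (hφS : φ ∉ S)
    (hS : ∀ y : V, y ∈ S ↔ ∃ hy : y ≠ φ,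
      (SimpleGraph.induce {x : V | x ≠ φ} (wGraph w)).Reachable ⟨y, hy⟩ ⟨x₀, hx₀⟩)
    (hST : ∀ i, t i ∉ S)
    (c : V → Fin k) (hc : ∀ i, c (t i) = i)
    (hcmin : mtcWeight w c = minMTC w t) :
    ∀ x ∈ S, c x = c φ :=
  articulation_point_component_same_block_general w t hconn φ x₀ hx₀ S hφS hS hST c hc hcmin
end

section
/- Let v_1, v_2 ∈ V \ T be two distinct non-terminal vertices with N(v_1) \ {v_2} = N(v_2) \ {v_1} and such that w(v_1, v) = w(v_2, v) for every common neighbor v ∈ N(v_1) \ {v_2}. Then there exists at least one minimum multiterminal cut partition of G in which v_1 and v_2 lie in the same block. -/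
section aux
variable {V : Type*} [DecidableEq V] {k : ℕ}

lemma aux_ind (c : V → Fin k) (v₁ v₂ : V) (hne : v₁ ≠ v₂) (W : ℕ) (a b : V) :
    (if Function.update c v₁ (c v₂) a = Function.update c v₁ (c v₂) b then 0 else W) +
    (if Function.update c v₂ (c v₁) a = Function.update c v₂ (c v₁) b then 0 else W) ≤
    (if c a = c b then 0 else W) +
    (if c (Equiv.swap v₁ v₂ a) = c (Equiv.swap v₁ v₂ b) then 0 else W) := by
  rcases eq_or_ne a b with rfl | hab
  · simp
  · by_cases ha1 : a = v₁ <;> by_cases ha2 : a = v₂ <;>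
      by_cases hb1 : b = v₁ <;> by_cases hb2 : b = v₂ <;>
      simp_all [Function.update_apply, Equiv.swap_apply_def] <;>
      split_ifs <;> simp_all <;> omega

lemma aux_w (w : Sym2 V → ℕ) (hloopless : ∀ x, w (Sym2.diag x) = 0)
    (v₁ v₂ : V) (hne : v₁ ≠ v₂)
    (hnbr : ∀ u : V, u ≠ v₁ → u ≠ v₂ → w s(u, v₁) = w s(u, v₂))
    (a b : V) : w s(Equiv.swap v₁ v₂ a, Equiv.swap v₁ v₂ b) = w s(a, b) := by
  have hd : ∀ x : V, w s(x, x) = 0 := fun x => hloopless x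
  have hnbr' : ∀ u : V, u ≠ v₁ → u ≠ v₂ → w s(v₁, u) = w s(v₂, u) := by
    intro u h1 h2
    rw [Sym2.eq_swap, show s(v₂, u) = s(u, v₂) from Sym2.eq_swap]
    exact hnbr u h1 h2
  by_cases ha1 : a = v₁ <;> by_cases ha2 : a = v₂ <;>
    by_cases hb1 : b = v₁ <;> by_cases hb2 : b = v₂ <;>
    simp_all [Equiv.swap_apply_def]
  all_goals first
    | rw [Sym2.eq_swap]
    | exact (hnbr' b hb1 hb2).symm
    | exact (hnbr b hb1 hb2).symm
    | exact hnbr' b hb1 hb2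
    | exact hnbr b hb1 hb2
end aux

/-- if two distinct non-terminal vertices `v₁, v₂` have equal
neighborhoods (apart from each other) with equal edge weights, i.e.
`w(u, v₁) = w(u, v₂)` for every vertex `u ∉ {v₁, v₂}` (in particular
`N(v₁) \ {v₂} = N(v₂) \ {v₁}`), then some minimum multiterminal cut partition
places `v₁` and `v₂` in the same block. -/
theorem equal_neighborhood_same_block
    {V : Type*} [Fintype V] [DecidableEq V] {k : ℕ} (hk : 2 ≤ k)
    (w : Sym2 V → ℕ) (hloopless : ∀ x, w (Sym2.diag x) = 0)
    (t : Fin k → V) (ht : Function.Injective t)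
    (v₁ v₂ : V) (hne : v₁ ≠ v₂)
    (ht₁ : ∀ i, t i ≠ v₁) (ht₂ : ∀ i, t i ≠ v₂)
    (hnbr : ∀ u : V, u ≠ v₁ → u ≠ v₂ → w s(u, v₁) = w s(u, v₂)) :
    ∃ c : V → Fin k, (∀ i, c (t i) = i) ∧ mtcWeight w c = minMTC w t ∧
      c v₁ = c v₂ := by
  classical
  have hk0 : 0 < k := by omega
  have hSne : {n | ∃ c : V → Fin k, (∀ i, c (t i) = i) ∧ mtcWeight w c = n}.Nonempty := by
    refine ⟨_, fun v => if h : ∃ i, t i = v then h.choose else ⟨0, hk0⟩, fun i => ?_, rfl⟩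
    have h : ∃ j, t j = t i := ⟨i, rfl⟩
    simp only [dif_pos h]
    exact ht h.choose_spec
  obtain ⟨c, hct, hcw⟩ : ∃ c : V → Fin k, (∀ i, c (t i) = i) ∧ mtcWeight w c = minMTC w t :=
    Nat.sInf_mem hSne
  set σ : Equiv.Perm V := Equiv.swap v₁ v₂ with hσ
  have hwσ : ∀ p : Sym2 V, w (Sym2.map σ p) = w p := by
    intro p; induction p using Sym2.ind with
    | _ a b => exact aux_w w hloopless v₁ v₂ hne hnbr a b
  set c₁ : V → Fin k := Function.update c v₁ (c v₂) with hc₁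
  set c₂ : V → Fin k := Function.update c v₂ (c v₁) with hc₂
  have mtcWeight_eq : ∀ d : V → Fin k,
      mtcWeight w d = ∑ p : Sym2 V, if (Sym2.map d p).IsDiag then 0 else w p := by
    intro d; rw [mtcWeight, Finset.sym2_univ]
  -- build the swap equiv on Sym2
  have hσσ : ∀ p : Sym2 V, Sym2.map σ (Sym2.map σ p) = p := by
    intro p; induction p using Sym2.ind with
    | _ a b => simp [Sym2.map_pair_eq, hσ, Equiv.swap_apply_self]
  let e : Sym2 V ≃ Sym2 V := ⟨Sym2.map σ, Sym2.map σ, hσσ, hσσ⟩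
  have h2 : (∑ p : Sym2 V, if (Sym2.map c (Sym2.map σ p)).IsDiag then 0
      else w (Sym2.map σ p)) = mtcWeight w c := by
    rw [mtcWeight_eq c]
    exact Fintype.sum_equiv e _ _ (fun p => rfl)
  have key : ∀ p : Sym2 V,
      ((if (Sym2.map c₁ p).IsDiag then 0 else w p) +
       (if (Sym2.map c₂ p).IsDiag then 0 else w p)) ≤
      ((if (Sym2.map c p).IsDiag then 0 else w p) +
       (if (Sym2.map c (Sym2.map σ p)).IsDiag then 0 else w (Sym2.map σ p))) := by
    intro p; induction p using Sym2.ind with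
    | _ a b =>
      have hw' : w (Sym2.map σ s(a, b)) = w s(a, b) := hwσ _
      rw [hw']
      simp only [Sym2.map_pair_eq, Sym2.mk_isDiag_iff]
      exact aux_ind c v₁ v₂ hne (w s(a, b)) a b
  have hsum : mtcWeight w c₁ + mtcWeight w c₂ ≤ 2 * mtcWeight w c := by
    calc mtcWeight w c₁ + mtcWeight w c₂
        = ∑ p : Sym2 V, ((if (Sym2.map c₁ p).IsDiag then 0 else w p) +
            (if (Sym2.map c₂ p).IsDiag then 0 else w p)) := by
          rw [mtcWeight_eq c₁, mtcWeight_eq c₂, Finset.sum_add_distrib]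
      _ ≤ ∑ p : Sym2 V, ((if (Sym2.map c p).IsDiag then 0 else w p) +
            (if (Sym2.map c (Sym2.map σ p)).IsDiag then 0 else w (Sym2.map σ p))) :=
          Finset.sum_le_sum (fun p _ => key p)
      _ = 2 * mtcWeight w c := by
          rw [Finset.sum_add_distrib, h2, ← mtcWeight_eq c]; ring
  have hvalid₁ : ∀ i, c₁ (t i) = i := fun i => by
    rw [hc₁, Function.update_apply, if_neg (ht₁ i)]; exact hct i
  have hvalid₂ : ∀ i, c₂ (t i) = i := fun i => by
    rw [hc₂, Function.update_apply, if_neg (ht₂ i)]; exact hct i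
  have hge₁ : minMTC w t ≤ mtcWeight w c₁ := Nat.sInf_le ⟨c₁, hvalid₁, rfl⟩
  have hge₂ : minMTC w t ≤ mtcWeight w c₂ := Nat.sInf_le ⟨c₂, hvalid₂, rfl⟩
  have heq₁ : mtcWeight w c₁ = minMTC w t := by omega
  refine ⟨c₁, hvalid₁, heq₁, ?_⟩
  rw [hc₁]
  simp [Function.update_apply, hne, hne.symm]
end

section
/- Let v ∈ V \ T be a non-terminal vertex and let (V_v, V \ V_v) be the largest minimum isolating cut separating v from the terminal set T (so v ∈ V_v, T ∩ V_v = ∅, the cut weight is λ(G, v, T), and V_v is inclusion-maximal among source sides of minimum isolating cuts). Then there exists at least one minimum multiterminal cut partition of G in which all vertices of V_v lie in the same block. -/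
/-- The weight of the bipartition cut `(S, V \ S)`: the total weight of edges
with exactly one endpoint in `S`. -/
def setCutWeight {V : Type*} [Fintype V] [DecidableEq V]
    (w : Sym2 V → ℕ) (S : Finset V) : ℕ :=
  mtcWeight w (fun x => if x ∈ S then (0 : Fin 2) else 1)

/-- `λ(G, v, T)`: the minimum weight of an isolating cut `(S, V \ S)` with
`v ∈ S` and all terminals outside `S`. -/
noncomputable def isolLambda {V : Type*} [Fintype V] [DecidableEq V] {k : ℕ}
    (w : Sym2 V → ℕ) (t : Fin k → V) (v : V) : ℕ :=
  sInf {n | ∃ S : Finset V, v ∈ S ∧ (∀ i, t i ∉ S) ∧ setCutWeight w S = n}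

lemma ind_diag (p q : Prop) [Decidable p] [Decidable q] :
    ((if p then (0:Fin 2) else 1) = (if q then (0:Fin 2) else 1)) ↔ (p ↔ q) := by
  by_cases hp : p <;> by_cases hq : q <;> simp [hp, hq]

lemma key_pt {k : ℕ} (hk : 2 ≤ k) (W : ℕ) (j a b : Fin k)
    (sx sy : Prop) [Decidable sx] [Decidable sy] :
    2 * (if (if sx then j else a) = (if sy then j else b) then 0 else W)
      + (if ((sx ∧ a = j) ↔ (sy ∧ b = j)) then 0 else W)
      + ∑ i ∈ Finset.univ.erase j, (if ((sx ∧ a ≠ i) ↔ (sy ∧ b ≠ i)) then 0 else W)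
    ≤ 2 * (if a = b then 0 else W) + k * (if (sx ↔ sy) then 0 else W) := by
  have hkW : k * W = (k - 2) * W + 2 * W := by
    have h : k = (k - 2) + 2 := by omega
    nth_rewrite 1 [h]; ring
  have hk1W : W + (k - 1) * W = k * W := by
    have h : k = 1 + (k - 1) := by omega
    nth_rewrite 2 [h]; ring
  by_cases hx : sx <;> by_cases hy : sy <;>
    simp only [hx, hy, if_true, if_false, true_and, false_and, iff_true, true_iff,
      iff_false, false_iff, ite_true, ite_false, not_not, not_true, iff_self,
      mul_zero, add_zero, Finset.sum_const_zero]
  · -- both in S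
    by_cases hab : a = b
    · simp [hab]
    · have hsum : (∑ i ∈ Finset.univ.erase j, (if ((a ≠ i) ↔ (b ≠ i)) then 0 else W))
          ≤ (if a ∈ Finset.univ.erase j then W else 0)
            + (if b ∈ Finset.univ.erase j then W else 0) := by
        calc (∑ i ∈ Finset.univ.erase j, (if ((a ≠ i) ↔ (b ≠ i)) then 0 else W))
            ≤ ∑ i ∈ Finset.univ.erase j,
                ((if i = a then W else 0) + (if i = b then W else 0)) := by
              apply Finset.sum_le_sum
              intro i _
              split_ifs <;> omega
          _ = _ := by
              rw [Finset.sum_add_distrib, Finset.sum_ite_eq' _ a (fun _ => W),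
                Finset.sum_ite_eq' _ b (fun _ => W)]
      simp only [Finset.mem_erase, Finset.mem_univ, and_true] at hsum
      rw [if_neg hab]
      by_cases haj : a = j <;> by_cases hbj : b = j
      · exact absurd (haj.trans hbj.symm) hab
      · rw [if_neg (not_not_intro haj), if_pos hbj] at hsum
        rw [if_neg (show ¬((a = j) ↔ (b = j)) from fun h => hbj (h.1 haj))]
        linarith
      · rw [if_pos haj, if_neg (not_not_intro hbj)] at hsum
        rw [if_neg (show ¬((a = j) ↔ (b = j)) from fun h => haj (h.2 hbj))]
        linarith
      · rw [if_pos haj, if_pos hbj] at hsum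
        rw [if_pos (iff_of_false haj hbj)]
        linarith
  · -- x in S, y not in S
    by_cases haj : a = j
    · rw [haj]
      have hsum : (∑ i ∈ Finset.univ.erase j, (if j = i then 0 else W)) = (k - 1) * W := by
        rw [Finset.sum_congr rfl (fun i hi => if_neg (fun h => (Finset.mem_erase.1 hi).1 h.symm))]
        rw [Finset.sum_const, Finset.card_erase_of_mem (Finset.mem_univ j),
          Finset.card_univ, Fintype.card_fin, smul_eq_mul]
      rw [hsum, if_neg (not_not_intro rfl)]
      linarith
    · have haj' : a ∈ Finset.univ.erase j := Finset.mem_erase.2 ⟨haj, Finset.mem_univ a⟩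
      have hsum : (∑ i ∈ Finset.univ.erase j, (if a = i then 0 else W)) ≤ (k - 2) * W := by
        rw [← Finset.sum_erase_add _ _ haj', if_pos rfl, add_zero]
        calc _ ≤ ((Finset.univ.erase j).erase a).card • W := by
              apply Finset.sum_le_card_nsmul
              intro i _
              split <;> omega
          _ = (k - 2) * W := by
              rw [Finset.card_erase_of_mem haj', Finset.card_erase_of_mem (Finset.mem_univ j),
                Finset.card_univ, Fintype.card_fin, smul_eq_mul]
              congr 1
      rw [if_pos haj]
      have h1 : (if j = b then (0:ℕ) else W) ≤ W := by split <;> omega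
      have h2 : (0:ℕ) ≤ (if a = b then (0:ℕ) else W) := by omega
      linarith
  · -- y in S, x not in S
    by_cases hbj : b = j
    · rw [hbj]
      have hsum : (∑ i ∈ Finset.univ.erase j, (if j = i then 0 else W)) = (k - 1) * W := by
        rw [Finset.sum_congr rfl (fun i hi => if_neg (fun h => (Finset.mem_erase.1 hi).1 h.symm))]
        rw [Finset.sum_const, Finset.card_erase_of_mem (Finset.mem_univ j),
          Finset.card_univ, Fintype.card_fin, smul_eq_mul]
      rw [hsum, if_neg (not_not_intro rfl)]
      have h1 : (if a = j then (0:ℕ) else W) ≤ W := by split <;> omega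
      linarith
    · have hbj' : b ∈ Finset.univ.erase j := Finset.mem_erase.2 ⟨hbj, Finset.mem_univ b⟩
      have hsum : (∑ i ∈ Finset.univ.erase j, (if b = i then 0 else W)) ≤ (k - 2) * W := by
        rw [← Finset.sum_erase_add _ _ hbj', if_pos rfl, add_zero]
        calc _ ≤ ((Finset.univ.erase j).erase b).card • W := by
              apply Finset.sum_le_card_nsmul
              intro i _
              split <;> omega
          _ = (k - 2) * W := by
              rw [Finset.card_erase_of_mem hbj', Finset.card_erase_of_mem (Finset.mem_univ j),
                Finset.card_univ, Fintype.card_fin, smul_eq_mul]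
              congr 1
      rw [if_pos hbj]
      have h1 : (if a = j then (0:ℕ) else W) ≤ W := by split <;> omega
      have h2 : (0:ℕ) ≤ (if a = b then (0:ℕ) else W) := by omega
      linarith
  · exact Nat.le_refl _

lemma key_sum {V : Type*} [Fintype V] [DecidableEq V] {k : ℕ} (hk : 2 ≤ k)
    (w : Sym2 V → ℕ) (S : Finset V) (c : V → Fin k) (j : Fin k) :
    2 * mtcWeight w (fun z => if z ∈ S then j else c z)
      + setCutWeight w (S.filter (fun z => c z = j))
      + ∑ i ∈ Finset.univ.erase j, setCutWeight w (S.filter (fun z => c z ≠ i))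
    ≤ 2 * mtcWeight w c + k * setCutWeight w S := by
  unfold setCutWeight mtcWeight
  rw [Finset.mul_sum, Finset.mul_sum, Finset.mul_sum, Finset.sum_comm,
    ← Finset.sum_add_distrib, ← Finset.sum_add_distrib, ← Finset.sum_add_distrib]
  apply Finset.sum_le_sum
  intro p _
  induction p using Sym2.inductionOn with
  | hf x y =>
    simp only [Sym2.map_pair_eq, Sym2.mk_isDiag_iff, ind_diag, Finset.mem_filter]
    exact key_pt hk (w s(x,y)) j (c x) (c y) (x ∈ S) (y ∈ S)

/-- let `v` be a non-terminal vertex and `(S, V \ S)` the largest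
minimum isolating cut separating `v` from the terminal set (`v ∈ S`, no
terminal in `S`, cut weight `λ(G, v, T)`, and `S` inclusion-maximal among
source sides of minimum isolating cuts). Then some minimum multiterminal cut
partition of `G` places all vertices of `S` in the same block. -/
theorem largest_min_isolating_cut_nonterminal_same_block
    {V : Type*} [Fintype V] [DecidableEq V] {k : ℕ} (hk : 2 ≤ k)
    (w : Sym2 V → ℕ) (hloopless : ∀ x, w (Sym2.diag x) = 0)
    (t : Fin k → V) (ht : Function.Injective t)
    (v : V) (hvt : ∀ i, t i ≠ v)
    (S : Finset V) (hvS : v ∈ S) (hTS : ∀ i, t i ∉ S)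
    (hSmin : setCutWeight w S = isolLambda w t v)
    (hSmax : ∀ S' : Finset V, v ∈ S' → (∀ i, t i ∉ S') →
      setCutWeight w S' = isolLambda w t v → S ⊆ S' → S' = S) :
    ∃ c : V → Fin k, (∀ i, c (t i) = i) ∧ mtcWeight w c = minMTC w t ∧
      ∀ x ∈ S, c x = c v := by
  classical
  have hk0 : 0 < k := by omega
  have hne : {n | ∃ c : V → Fin k, (∀ i, c (t i) = i) ∧ mtcWeight w c = n}.Nonempty := by
    refine ⟨_, fun x => if h : ∃ i, t i = x then h.choose else ⟨0, hk0⟩, fun i => ?_, rfl⟩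
    have h : ∃ i', t i' = t i := ⟨i, rfl⟩
    simp only [dif_pos h]
    exact ht h.choose_spec
  obtain ⟨c, hct, hcw⟩ : ∃ c : V → Fin k, (∀ i, c (t i) = i) ∧ mtcWeight w c = minMTC w t :=
    Nat.sInf_mem hne
  set j := c v with hj
  set c' : V → Fin k := fun z => if z ∈ S then j else c z with hc'
  have hc't : ∀ i, c' (t i) = i := fun i => by simp [hc', hTS i, hct i]
  have hlam : ∀ S' : Finset V, v ∈ S' → (∀ i, t i ∉ S') →
      isolLambda w t v ≤ setCutWeight w S' :=
    fun S' h1 h2 => Nat.sInf_le ⟨S', h1, h2, rfl⟩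
  have h1 : isolLambda w t v ≤ setCutWeight w (S.filter (fun z => c z = j)) :=
    hlam _ (Finset.mem_filter.2 ⟨hvS, rfl⟩) (fun i hi => hTS i (Finset.mem_filter.1 hi).1)
  have h2 : (Finset.univ.erase j).card * isolLambda w t v
      ≤ ∑ i ∈ Finset.univ.erase j, setCutWeight w (S.filter (fun z => c z ≠ i)) := by
    rw [← smul_eq_mul]
    apply Finset.card_nsmul_le_sum
    intro i hi
    refine hlam _ (Finset.mem_filter.2 ⟨hvS, ?_⟩)
      (fun i' hi' => hTS i' (Finset.mem_filter.1 hi').1)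
    exact fun h => (Finset.mem_erase.1 hi).1 h.symm
  have hcard : (Finset.univ.erase j).card = k - 1 := by
    rw [Finset.card_erase_of_mem (Finset.mem_univ j), Finset.card_univ, Fintype.card_fin]
  have hsum := key_sum hk w S c j
  have hklam : isolLambda w t v + (k - 1) * isolLambda w t v = k * isolLambda w t v := by
    have h : k = 1 + (k - 1) := by omega
    calc isolLambda w t v + (k - 1) * isolLambda w t v
        = (1 + (k - 1)) * isolLambda w t v := by ring
      _ = k * isolLambda w t v := by rw [← h]
  rw [hcard] at h2
  rw [hSmin] at hsum
  have hle : mtcWeight w c' ≤ mtcWeight w c := by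
    have := hsum
    -- 2*mtc c' + B + C ≤ 2*mtc c + k*λ, B ≥ λ, C ≥ (k-1)λ
    linarith
  have hge : minMTC w t ≤ mtcWeight w c' := Nat.sInf_le ⟨c', hc't, rfl⟩
  refine ⟨c', hc't, le_antisymm (hle.trans hcw.le) hge, fun x hx => ?_⟩
  simp [hc', hx, hvS]
end

section
/- Let v ∈ V \ T and let (V_v, V \ V_v) be a minimum isolating cut separating v from the terminal set T (v ∈ V_v, T ⊆ V \ V_v, cut weight λ(G, v, T)). Then for every nonempty set V_C ⊆ V_v with v ∉ V_C, one has w(V_C, V_v \ V_C) ≥ w(V_C, V \ V_v); i.e., the total weight of edges connecting V_C to the rest of the source side is at least the total weight of edges connecting V_C to the sink side. -/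
open Finset in
lemma dbl {V : Type*} [Fintype V] [DecidableEq V]
    (F : Sym2 V → ℕ) (hdiag : ∀ a, F (Sym2.diag a) = 0) :
    ∑ a : V, ∑ b : V, F s(a, b) = 2 * ∑ p ∈ Finset.univ.sym2, F p := by
  letI : LinearOrder V := LinearOrder.lift' (Fintype.equivFin V) (Equiv.injective _)
  have hkey := Finset.sum_sym2_filter_not_isDiag (Finset.univ : Finset V) F
  have h1 : ∑ p ∈ Finset.univ.sym2, F p
      = ∑ i ∈ Finset.univ.offDiag with i.1 < i.2, F s(i.1, i.2) := by
    refine Eq.trans ?_ (Eq.trans hkey (Finset.sum_congr (by congr!) fun _ _ => rfl))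
    rw [Finset.sum_filter]
    refine Finset.sum_congr rfl fun p _ => ?_
    induction p using Sym2.ind with
    | _ a b =>
      by_cases h : (s(a,b) : Sym2 V).IsDiag
      · rw [if_neg (not_not_intro h)]
        rw [Sym2.mk_isDiag_iff] at h
        subst h
        exact hdiag a
      · rw [if_pos h]
  rw [h1]
  have h2 : ∑ a : V, ∑ b : V, F s(a, b) = ∑ x ∈ univ ×ˢ univ, F s(x.1, x.2) := by
    rw [Finset.sum_product]
  have h3 : (univ ×ˢ univ : Finset (V × V)) = Finset.univ.diag ∪ Finset.univ.offDiag :=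
    (Finset.diag_union_offDiag _).symm
  rw [h2, h3, Finset.sum_union (Finset.disjoint_diag_offDiag _)]
  have h4 : ∑ x ∈ Finset.univ.diag, F s(x.1, x.2) = 0 := by
    refine Finset.sum_eq_zero fun x hx => ?_
    rw [Finset.mem_diag] at hx
    rw [← hx.2]
    exact hdiag x.1
  rw [h4, zero_add, ← Finset.sum_filter_add_sum_filter_not Finset.univ.offDiag (fun x => x.1 < x.2)]
  have h5 : ∑ x ∈ Finset.univ.offDiag with ¬ x.1 < x.2, F s(x.1, x.2)
      = ∑ x ∈ Finset.univ.offDiag with x.1 < x.2, F s(x.1, x.2) := by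
    refine Finset.sum_nbij' (fun x => (x.2, x.1)) (fun x => (x.2, x.1)) ?_ ?_ ?_ ?_ ?_
    · rintro ⟨a, b⟩ h
      simp only [Finset.mem_filter, Finset.mem_offDiag, mem_univ, true_and, not_lt] at h ⊢
      exact ⟨Ne.symm h.1, lt_of_le_of_ne h.2 (Ne.symm h.1)⟩
    · rintro ⟨a, b⟩ h
      simp only [Finset.mem_filter, Finset.mem_offDiag, mem_univ, true_and, not_lt] at h ⊢
      exact ⟨Ne.symm h.1, le_of_lt h.2⟩
    · rintro ⟨a, b⟩ _; rfl
    · rintro ⟨a, b⟩ _; rfl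
    · rintro ⟨a, b⟩ _
      simp only
      rw [Sym2.eq_swap]
  rw [h5]
  ring


/-- `w(A, B)`: total weight of edges with one endpoint in `A` and the other
in `B` (for disjoint sets `A` and `B`). -/
def pairWeight {V : Type*} [Fintype V] [DecidableEq V]
    (w : Sym2 V → ℕ) (A B : Finset V) : ℕ :=
  ∑ a ∈ A, ∑ b ∈ B, w s(a, b)

open Finset in
private lemma aux_hcut {V : Type*} [Fintype V] [DecidableEq V] (w : Sym2 V → ℕ) (T : Finset V) :
    2 * setCutWeight w T
      = ∑ a : V, ∑ b : V, if (a ∈ T ↔ b ∈ T) then 0 else w s(a, b) := by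
  have hd : ∀ a : V,
      (fun p => if (Sym2.map (fun x => if x ∈ T then (0 : Fin 2) else 1) p).IsDiag
        then 0 else w p) (Sym2.diag a) = 0 := by
    intro a
    simp only
    rw [if_pos]
    show (Sym2.map _ s(a, a)).IsDiag
    rw [Sym2.map_pair_eq]
    exact Sym2.mk_isDiag_iff.mpr rfl
  have h := dbl (fun p => if (Sym2.map (fun x => if x ∈ T then (0 : Fin 2) else 1) p).IsDiag
      then 0 else w p) hd
  unfold setCutWeight mtcWeight
  rw [← h]
  refine Finset.sum_congr rfl fun a _ => Finset.sum_congr rfl fun b _ => ?_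
  simp only [Sym2.map_pair_eq, Sym2.mk_isDiag_iff]
  by_cases haT : a ∈ T <;> by_cases hbT : b ∈ T <;> simp [haT, hbT]

private lemma aux_pw_expand {V : Type*} [Fintype V] [DecidableEq V] (w : Sym2 V → ℕ) (A B : Finset V) :
    pairWeight w A B = ∑ a : V, ∑ b : V, if a ∈ A ∧ b ∈ B then w s(a, b) else 0 := by
  unfold pairWeight
  symm
  calc ∑ a : V, ∑ b : V, (if a ∈ A ∧ b ∈ B then w s(a, b) else 0)
      = ∑ a : V, (if a ∈ A then ∑ b ∈ B, w s(a, b) else 0) := by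
        refine Finset.sum_congr rfl fun a _ => ?_
        by_cases ha : a ∈ A
        · simp [ha, Finset.sum_ite_mem]
        · simp [ha]
    _ = ∑ a ∈ A, ∑ b ∈ B, w s(a, b) := by
        rw [Finset.sum_ite_mem, Finset.univ_inter]

private lemma aux_pw2 {V : Type*} [Fintype V] [DecidableEq V] (w : Sym2 V → ℕ) (A B : Finset V) :
    2 * pairWeight w A B
      = ∑ a : V, ∑ b : V,
          ((if a ∈ A ∧ b ∈ B then w s(a, b) else 0)
            + (if b ∈ A ∧ a ∈ B then w s(a, b) else 0)) := by
  have e2 : ∑ a : V, ∑ b : V, (if b ∈ A ∧ a ∈ B then w s(a, b) else 0)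
      = pairWeight w A B := by
    rw [Finset.sum_comm, aux_pw_expand]
    refine Finset.sum_congr rfl fun a _ => Finset.sum_congr rfl fun b _ => ?_
    rw [Sym2.eq_swap]
  have : 2 * pairWeight w A B
      = (∑ a : V, ∑ b : V, (if a ∈ A ∧ b ∈ B then w s(a, b) else 0))
        + (∑ a : V, ∑ b : V, (if b ∈ A ∧ a ∈ B then w s(a, b) else 0)) := by
    rw [two_mul]
    congr 1
    · exact aux_pw_expand w A B
    · exact e2.symm
  rw [this, ← Finset.sum_add_distrib]
  exact Finset.sum_congr rfl fun a _ => (Finset.sum_add_distrib).symm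

private lemma aux_key_identity {V : Type*} [Fintype V] [DecidableEq V]
    (w : Sym2 V → ℕ) (S VC : Finset V) (hVC : VC ⊆ S) :
    2 * setCutWeight w (S \ VC) + 2 * pairWeight w VC (Finset.univ \ S)
      = 2 * setCutWeight w S + 2 * pairWeight w VC (S \ VC) := by
  rw [aux_hcut w S, aux_hcut w (S \ VC), aux_pw2 w VC (Finset.univ \ S), aux_pw2 w VC (S \ VC),
    ← Finset.sum_add_distrib, ← Finset.sum_add_distrib]
  refine Finset.sum_congr rfl fun a _ => ?_
  rw [← Finset.sum_add_distrib, ← Finset.sum_add_distrib]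
  refine Finset.sum_congr rfl fun b _ => ?_
  by_cases haS : a ∈ S <;> by_cases hbS : b ∈ S <;>
    by_cases haC : a ∈ VC <;> by_cases hbC : b ∈ VC
  all_goals first
    | exact absurd (hVC haC) haS
    | exact absurd (hVC hbC) hbS
    | simp [Finset.mem_sdiff, haS, hbS, haC, hbC]

/-- let `(S, V \ S)` be a minimum isolating cut separating the
non-terminal vertex `v` from the terminal set. Then for every nonempty
`V_C ⊆ S` with `v ∉ V_C` we have `w(V_C, S \ V_C) ≥ w(V_C, V \ S)`. -/
theorem min_isolating_cut_inner_connection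
    {V : Type*} [Fintype V] [DecidableEq V] {k : ℕ} (hk : 2 ≤ k)
    (w : Sym2 V → ℕ) (hloopless : ∀ x, w (Sym2.diag x) = 0)
    (t : Fin k → V) (ht : Function.Injective t)
    (v : V) (hvt : ∀ i, t i ≠ v)
    (S : Finset V) (hvS : v ∈ S) (hTS : ∀ i, t i ∉ S)
    (hSmin : setCutWeight w S = isolLambda w t v)
    (VC : Finset V) (hVC : VC ⊆ S) (hVCne : VC.Nonempty) (hvVC : v ∉ VC) :
    pairWeight w VC (Finset.univ \ S) ≤ pairWeight w VC (S \ VC) := by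
  have hle : setCutWeight w S ≤ setCutWeight w (S \ VC) := by
    rw [hSmin]
    exact Nat.sInf_le ⟨S \ VC, Finset.mem_sdiff.mpr ⟨hvS, hvVC⟩,
      fun i h => hTS i (Finset.mem_sdiff.mp h).1, rfl⟩
  have hk := aux_key_identity w S VC hVC
  omega
end

section
/- Let x ∈ V \ T be a non-terminal vertex adjacent to at least one terminal, let t_i be a terminal adjacent to x for which the edge weight w(x, t_i) is maximal among all terminals adjacent to x, and set w_M = w(x, t_i). If t_j is a terminal adjacent to x with t_j ≠ t_i and w(x, t_j) + w(x, V \ T) ≤ w_M, then there exists at least one minimum multiterminal cut partition of G in which x does not lie in the block of t_j. -/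
lemma sym2_filter_mem_eq_image {V : Type*} [Fintype V] [DecidableEq V] (x : V) :
    Finset.univ.sym2.filter (fun p => x ∈ p) = Finset.univ.image (fun y => s(x, y)) := by
  ext p
  simp only [Finset.mem_filter, Finset.mem_image, Finset.mem_univ, true_and,
    Finset.mem_sym2_iff]
  constructor
  · rintro ⟨-, hx⟩
    obtain ⟨y, rfl⟩ := Sym2.mem_iff_exists.mp hx
    exact ⟨y, rfl⟩
  · rintro ⟨y, rfl⟩
    exact ⟨fun z _ => trivial, Sym2.mem_mk_left x y⟩

lemma mtcWeight_split {V : Type*} [Fintype V] [DecidableEq V] {k : ℕ}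
    (w : Sym2 V → ℕ) (x : V) (d : V → Fin k) :
    mtcWeight w d =
      (∑ y, if d x = d y then 0 else w s(x, y)) +
      ∑ p ∈ Finset.univ.sym2.filter (fun p => ¬ x ∈ p),
        (if (Sym2.map d p).IsDiag then 0 else w p) := by
  classical
  rw [mtcWeight, ← Finset.sum_filter_add_sum_filter_not Finset.univ.sym2 (fun p => x ∈ p)]
  congr 1
  rw [sym2_filter_mem_eq_image,
    Finset.sum_image (by intro a _ b _ h; exact Sym2.congr_right.mp h)]
  apply Finset.sum_congr rfl
  intro y _
  simp [Sym2.mk_isDiag_iff]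

/-- let `x` be a non-terminal vertex adjacent to at least one
terminal, let `t i` be a terminal adjacent to `x` whose edge weight `w(x, t i)`
is maximal among all terminals, with `w_M = w(x, t i)`. If `t j` is a terminal
adjacent to `x` with `j ≠ i` and `w(x, t j) + w(x, V \ T) ≤ w_M`, then some
minimum multiterminal cut partition of `G` does not place `x` in the block
of `t j`. -/
theorem branching_pruning
    {V : Type*} [Fintype V] [DecidableEq V] {k : ℕ} (hk : 2 ≤ k)
    (w : Sym2 V → ℕ) (hloopless : ∀ x, w (Sym2.diag x) = 0)
    (t : Fin k → V) (ht : Function.Injective t)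
    (x : V) (hxt : ∀ i, t i ≠ x)
    (i j : Fin k) (hij : j ≠ i)
    (hadj_i : 0 < w s(x, t i))
    (hmax : ∀ l : Fin k, w s(x, t l) ≤ w s(x, t i))
    (hadj_j : 0 < w s(x, t j))
    (hcond : w s(x, t j) +
        (∑ y ∈ Finset.univ.filter (fun y : V => ∀ l, t l ≠ y), w s(x, y))
      ≤ w s(x, t i)) :
    ∃ c : V → Fin k, (∀ l, c (t l) = l) ∧ mtcWeight w c = minMTC w t ∧
      c x ≠ j := by
  classical
  set S : Set ℕ := {n | ∃ c : V → Fin k, (∀ i, c (t i) = i) ∧ mtcWeight w c = n} with hS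
  have hmin : minMTC w t = sInf S := rfl
  have hne : S.Nonempty := by
    refine ⟨_, fun v => if h : ∃ l, t l = v then h.choose else i, fun l => ?_, rfl⟩
    have h : ∃ l', t l' = t l := ⟨l, rfl⟩
    simp only [dif_pos h]
    exact ht h.choose_spec
  obtain ⟨c, hc, hcw⟩ := Nat.sInf_mem hne
  by_cases hcx : c x = j
  · -- move `x` from the block of `t j` to the block of `t i`
    set c' : V → Fin k := Function.update c x i with hc'def
    have hc' : ∀ l, c' (t l) = l := fun l => by
      rw [hc'def, Function.update_of_ne (hxt l)]; exact hc l
    have hc'x : c' x = i := Function.update_self x i c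
    -- the two partitions agree on pairs not containing `x`
    have htail : ∀ p ∈ Finset.univ.sym2.filter (fun p => ¬ x ∈ p),
        (if (Sym2.map c' p).IsDiag then 0 else w p)
          = (if (Sym2.map c p).IsDiag then 0 else w p) := by
      intro p hp
      simp only [Finset.mem_filter] at hp
      induction p using Sym2.ind with
      | _ a b =>
        have ha : a ≠ x := fun h => hp.2 (h ▸ Sym2.mem_mk_left a b)
        have hb : b ≠ x := fun h => hp.2 (h ▸ Sym2.mem_mk_right a b)
        simp [hc'def, Function.update_of_ne ha, Function.update_of_ne hb]
    -- comparing the sums of edges at `x`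
    have e1 : ∀ d : V → Fin k,
        (∑ y, if d x = d y then 0 else w s(x, y)) +
          ∑ y ∈ Finset.univ.filter (fun y => d x = d y), w s(x, y)
        = ∑ y, w s(x, y) := by
      intro d
      rw [Finset.sum_filter, ← Finset.sum_add_distrib]
      apply Finset.sum_congr rfl
      intro y _
      by_cases h : d x = d y <;> simp [h]
    have hA : ∑ y ∈ Finset.univ.filter (fun y => c x = c y), w s(x, y)
        ≤ w s(x, t j) + ∑ y ∈ Finset.univ.filter (fun y : V => ∀ l, t l ≠ y), w s(x, y) := by
      have hsub : Finset.univ.filter (fun y => c x = c y) ⊆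
          insert (t j) (Finset.univ.filter (fun y : V => ∀ l, t l ≠ y)) := by
        intro y hy
        simp only [Finset.mem_filter, Finset.mem_univ, true_and] at hy
        by_cases hterm : ∃ l, t l = y
        · obtain ⟨l, rfl⟩ := hterm
          have hlj : l = j := by rw [hc l, hcx] at hy; exact hy.symm
          subst hlj
          exact Finset.mem_insert_self _ _
        · push_neg at hterm
          exact Finset.mem_insert_of_mem (by simp [hterm])
      calc ∑ y ∈ Finset.univ.filter (fun y => c x = c y), w s(x, y)
          ≤ ∑ y ∈ insert (t j) (Finset.univ.filter (fun y : V => ∀ l, t l ≠ y)), w s(x, y) :=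
            Finset.sum_le_sum_of_subset hsub
        _ = w s(x, t j) + ∑ y ∈ Finset.univ.filter (fun y : V => ∀ l, t l ≠ y), w s(x, y) := by
            refine Finset.sum_insert ?_
            intro h
            rw [Finset.mem_filter] at h
            exact h.2 j rfl
    have hB : w s(x, t i) ≤ ∑ y ∈ Finset.univ.filter (fun y => c' x = c' y), w s(x, y) := by
      refine Finset.single_le_sum (f := fun y => w s(x, y)) (fun y _ => Nat.zero_le _) ?_
      simp only [Finset.mem_filter, Finset.mem_univ, true_and]
      rw [hc'x, hc' i]
    have hfilt : ∑ y ∈ Finset.univ.filter (fun y => c x = c y), w s(x, y)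
        ≤ ∑ y ∈ Finset.univ.filter (fun y => c' x = c' y), w s(x, y) :=
      le_trans hA (le_trans hcond hB)
    have hhead : (∑ y, if c' x = c' y then 0 else w s(x, y))
        ≤ ∑ y, if c x = c y then 0 else w s(x, y) := by
      have h1 := e1 c
      have h2 := e1 c'
      omega
    have hkey : mtcWeight w c' ≤ mtcWeight w c := by
      rw [mtcWeight_split w x c, mtcWeight_split w x c',
        Finset.sum_congr rfl htail]
      exact Nat.add_le_add_right hhead _
    have h2 : sInf S ≤ mtcWeight w c' := Nat.sInf_le ⟨c', hc', rfl⟩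
    refine ⟨c', hc', ?_, ?_⟩
    · rw [hmin]
      exact le_antisymm (hcw ▸ hkey) h2
    · rw [hc'x]; exact hij.symm
  · exact ⟨c, hc, by rw [hmin]; exact hcw, hcx⟩
end

section
/- Let λ_i = λ(G, t_i, T \ {t_i}) for i = 1, …, k be the minimum isolating cut weights of the terminals. Then the minimum multiterminal cut weight satisfies 𝒲(G) ≥ (1/2) Σ_{i=1}^{k} λ_i; i.e., half the sum of all minimum isolating cut weights is a lower bound on 𝒲(G). -/
/-- `λ_i = λ(G, t i, T \ {t i})`: the minimum weight of an isolating cut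
`(S, V \ S)` with `t i ∈ S` and all other terminals outside `S`. -/
noncomputable def terminalLambda {V : Type*} [Fintype V] [DecidableEq V] {k : ℕ}
    (w : Sym2 V → ℕ) (t : Fin k → V) (i : Fin k) : ℕ :=
  sInf {n | ∃ S : Finset V, t i ∈ S ∧ (∀ l, l ≠ i → t l ∉ S) ∧ setCutWeight w S = n}

/-- half the sum of the minimum isolating cut weights of all
terminals is a lower bound on the minimum multiterminal cut weight:
`𝒲(G) ≥ (1/2) Σ_i λ_i`, stated as `Σ_i λ_i ≤ 2 · 𝒲(G)`. -/
theorem half_sum_isolating_lower_bound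
    {V : Type*} [Fintype V] [DecidableEq V] {k : ℕ} (hk : 2 ≤ k)
    (w : Sym2 V → ℕ) (hloopless : ∀ x, w (Sym2.diag x) = 0)
    (t : Fin k → V) (ht : Function.Injective t) :
    ∑ i, terminalLambda w t i ≤ 2 * minMTC w t := by
  classical
  have hk0 : 0 < k := by omega
  have hne : {n | ∃ c : V → Fin k, (∀ i, c (t i) = i) ∧ mtcWeight w c = n}.Nonempty := by
    refine ⟨_, fun v => if h : ∃ i, t i = v then h.choose else ⟨0, hk0⟩, fun i => ?_, rfl⟩
    have h : ∃ j, t j = t i := ⟨i, rfl⟩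
    simp only [dif_pos h]
    exact ht h.choose_spec
  obtain ⟨c, hc, hcw⟩ := Nat.sInf_mem hne
  have hle : ∀ i, terminalLambda w t i ≤
      setCutWeight w (Finset.univ.filter fun v => c v = i) := by
    intro i
    apply Nat.sInf_le
    refine ⟨_, ?_, ?_, rfl⟩
    · simp [hc i]
    · intro l hl
      simp [hc l, hl]
  have hsum : ∑ i, setCutWeight w (Finset.univ.filter fun v => c v = i)
      = 2 * mtcWeight w c := by
    unfold setCutWeight mtcWeight
    rw [Finset.sum_comm, Finset.mul_sum]
    refine Finset.sum_congr rfl ?_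
    intro p hp
    induction p using Sym2.inductionOn with
    | hf x y =>
      simp only [Sym2.map_pair_eq, Sym2.mk_isDiag_iff, Finset.mem_filter,
        Finset.mem_univ, true_and]
      by_cases hxy : c x = c y
      · simp [hxy]
      · rw [if_neg hxy]
        have step : ∀ i : Fin k,
            (if (if c x = i then (0 : Fin 2) else 1) = (if c y = i then 0 else 1)
              then 0 else w s(x, y))
            = (if c x = i then w s(x, y) else 0) + (if c y = i then w s(x, y) else 0) := by
          intro i
          by_cases h1 : c x = i <;> by_cases h2 : c y = i
          · exact absurd (h1.trans h2.symm) hxy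
          · simp [h1, h2]
          · simp [h1, h2]
          · simp [h1, h2]
        rw [Finset.sum_congr rfl fun i _ => step i, Finset.sum_add_distrib,
          Finset.sum_ite_eq, Finset.sum_ite_eq]
        simp
        ring
  calc ∑ i, terminalLambda w t i
      ≤ ∑ i, setCutWeight w (Finset.univ.filter fun v => c v = i) :=
        Finset.sum_le_sum fun i _ => hle i
    _ = 2 * mtcWeight w c := hsum
    _ = 2 * minMTC w t := by rw [hcw]; rfl
end

section
/- Let v ∈ V \ T be a non-terminal vertex and e = (v, u) an edge incident to v with 2·w(e) ≥ w(E[v]), i.e., the weight of e is at least half the weighted degree of v. Then there exists at least one minimum multiterminal cut partition of G in which v and u lie in the same block. -/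
/-- let `v` be a non-terminal vertex and `e = (v, u)` an edge
incident to `v` with `2 · w(e) ≥ w(E[v])`, i.e. the weight of `e` is at least
half the weighted degree of `v`. Then some minimum multiterminal cut
partition of `G` places `v` and `u` in the same block. -/
theorem heavy_edge_same_block
    {V : Type*} [Fintype V] [DecidableEq V] {k : ℕ} (hk : 2 ≤ k)
    (w : Sym2 V → ℕ) (hloopless : ∀ x, w (Sym2.diag x) = 0)
    (t : Fin k → V) (ht : Function.Injective t)
    (v u : V) (hvu : v ≠ u) (hvt : ∀ i, t i ≠ v)
    (he : 0 < w s(v, u))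
    (hheavy : ∑ y, w s(v, y) ≤ 2 * w s(v, u)) :
    ∃ c : V → Fin k, (∀ i, c (t i) = i) ∧ mtcWeight w c = minMTC w t ∧
      c v = c u := by
  classical
  have hk0 : 0 < k := by omega
  have hne : {n | ∃ c : V → Fin k, (∀ i, c (t i) = i) ∧ mtcWeight w c = n}.Nonempty := by
    refine ⟨_, (fun x => if h : ∃ i, t i = x then h.choose else ⟨0, hk0⟩), ?_, rfl⟩
    intro i
    have h : ∃ j, t j = t i := ⟨i, rfl⟩
    simp only [dif_pos h]
    exact ht h.choose_spec
  have hmem := Nat.sInf_mem hne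
  obtain ⟨c, hct, hcw⟩ := hmem
  -- split lemma
  have himg : Finset.univ.sym2.filter (fun p => v ∈ p)
      = Finset.univ.image (fun y => s(v, y)) := by
    ext p
    simp [Sym2.mem_iff_exists, eq_comm]
  have hsplit : ∀ d : V → Fin k, mtcWeight w d =
      (∑ y, if d v = d y then 0 else w s(v, y)) +
      ∑ p ∈ Finset.univ.sym2.filter (fun p => ¬ v ∈ p),
        (if (Sym2.map d p).IsDiag then 0 else w p) := by
    intro d
    rw [mtcWeight, ← Finset.sum_filter_add_sum_filter_not Finset.univ.sym2 (fun p => v ∈ p)]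
    congr 1
    rw [himg, Finset.sum_image (by
      intro y _ y' _ h
      exact (Sym2.congr_right).mp h)]
    simp
  by_cases hcvu : c v = c u
  · exact ⟨c, hct, hcw, hcvu⟩
  · set c' : V → Fin k := Function.update c v (c u) with hc'
    have hc'u : c' u = c u := Function.update_of_ne (Ne.symm hvu) _ _
    have hc'v : c' v = c u := Function.update_self _ _ _
    have hct' : ∀ i, c' (t i) = i := fun i => by
      rw [hc', Function.update_of_ne (hvt i)]; exact hct i
    -- tail sums equal
    have htail : ∑ p ∈ Finset.univ.sym2.filter (fun p => ¬ v ∈ p),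
        (if (Sym2.map c' p).IsDiag then 0 else w p)
        = ∑ p ∈ Finset.univ.sym2.filter (fun p => ¬ v ∈ p),
        (if (Sym2.map c p).IsDiag then 0 else w p) := by
      apply Finset.sum_congr rfl
      intro p hp
      simp only [Finset.mem_filter] at hp
      induction p with
      | h a b =>
        have ha : a ≠ v := fun h => hp.2 (h ▸ Sym2.mem_mk_left a b)
        have hb : b ≠ v := fun h => hp.2 (h ▸ Sym2.mem_mk_right a b)
        simp [hc', Function.update_of_ne ha, Function.update_of_ne hb]
    -- head sum for c' bounded
    have hzero : (if c' v = c' u then 0 else w s(v, u)) = 0 := by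
      rw [if_pos (hc'v.trans hc'u.symm)]
    have hA' : (∑ y, if c' v = c' y then 0 else w s(v, y)) ≤ w s(v, u) := by
      have e1 : (∑ y, if c' v = c' y then 0 else w s(v, y))
          = ∑ y ∈ Finset.univ.erase u, (if c' v = c' y then 0 else w s(v, y)) :=
        (Finset.sum_erase (f := fun y => if c' v = c' y then 0 else w s(v, y)) _ hzero).symm
      have e2 : (∑ y ∈ Finset.univ.erase u, (if c' v = c' y then 0 else w s(v, y)))
          ≤ ∑ y ∈ Finset.univ.erase u, w s(v, y) := by
        apply Finset.sum_le_sum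
        intro y _
        split <;> simp
      have e3 : w s(v, u) + ∑ y ∈ Finset.univ.erase u, w s(v, y) = ∑ y, w s(v, y) :=
        Finset.add_sum_erase Finset.univ (fun y => w s(v, y)) (Finset.mem_univ u)
      have hb : ∑ y ∈ Finset.univ.erase u, w s(v, y) ≤ w s(v, u) := by
        rw [← e3, two_mul] at hheavy
        exact Nat.le_of_add_le_add_left hheavy
      exact e1 ▸ (e2.trans hb)
    have hA : w s(v, u) ≤ ∑ y, if c v = c y then 0 else w s(v, y) := by
      have := Finset.single_le_sum
        (f := fun y => if c v = c y then 0 else w s(v, y))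
        (fun y _ => Nat.zero_le _) (Finset.mem_univ u)
      simpa [if_neg hcvu] using this
    have hle : mtcWeight w c' ≤ mtcWeight w c := by
      rw [hsplit c', hsplit c, htail]
      exact Nat.add_le_add (hA'.trans hA) le_rfl
    have hge : minMTC w t ≤ mtcWeight w c' :=
      Nat.sInf_le ⟨c', hct', rfl⟩
    have hcw' : mtcWeight w c = minMTC w t := hcw
    exact ⟨c', hct', le_antisymm (hle.trans hcw'.le) hge, hc'v.trans hc'u.symm⟩
end

section
/- Let v_1, v_2 ∈ V \ T be non-terminal vertices forming a triangle with a vertex v_3 (so edges (v_1,v_2), (v_1,v_3), (v_2,v_3) all exist), let e = (v_1, v_2), and suppose w(e) + 2·w(v_1, v_3) ≥ w(E[v_1]) and w(e) + 2·w(v_2, v_3) ≥ w(E[v_2]). Then there exists at least one minimum multiterminal cut partition of G in which v_1 and v_2 lie in the same block. -/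
open Finset in

-- decomposition of sym2 sum
lemma sym2_split {V : Type*} [Fintype V] [DecidableEq V] (v₁ v₂ : V) (h12 : v₁ ≠ v₂)
    (g : Sym2 V → ℕ) :
    ∑ p ∈ Finset.univ.sym2, g p =
      (∑ y, g s(v₁, y)) + (∑ y ∈ Finset.univ.erase v₁, g s(v₂, y)) +
      ∑ p ∈ Finset.univ.sym2 with ¬ (v₁ ∈ p ∨ v₂ ∈ p), g p := by
  have h1 : Finset.univ.sym2.filter (fun p => v₁ ∈ p) = Finset.univ.image (fun y => s(v₁, y)) := by
    ext p
    simp only [mem_filter, mem_image, mem_univ, true_and, Finset.mem_sym2_iff]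
    constructor
    · rintro ⟨-, hp⟩
      obtain ⟨y, rfl⟩ := Sym2.mem_iff_exists.mp hp
      exact ⟨y, rfl⟩
    · rintro ⟨y, rfl⟩
      exact ⟨fun _ _ => trivial, Sym2.mem_mk_left _ _⟩
  have h2 : (Finset.univ.sym2.filter (fun p => ¬ v₁ ∈ p)).filter (fun p => v₂ ∈ p)
      = (Finset.univ.erase v₁).image (fun y => s(v₂, y)) := by
    ext p
    simp only [mem_filter, mem_image, Finset.mem_sym2_iff, mem_univ, true_and, mem_erase]
    constructor
    · rintro ⟨⟨-, hp1⟩, hp2⟩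
      obtain ⟨y, rfl⟩ := Sym2.mem_iff_exists.mp hp2
      refine ⟨y, ⟨?_, trivial⟩, rfl⟩
      rintro rfl
      exact hp1 (Sym2.mem_mk_right _ _)
    · rintro ⟨y, ⟨hy, -⟩, rfl⟩
      refine ⟨⟨fun _ _ => trivial, ?_⟩, Sym2.mem_mk_left _ _⟩
      simp only [Sym2.mem_iff]
      rintro (rfl | rfl)
      · exact h12 rfl
      · exact hy rfl
  have inj1 : Set.InjOn (fun y => s(v₁, y)) (Finset.univ : Finset V) := by
    intro a _ b _ hab
    exact Sym2.congr_right.mp hab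
  have inj2 : Set.InjOn (fun y => s(v₂, y)) (Finset.univ.erase v₁ : Finset V) := by
    intro a _ b _ hab
    exact Sym2.congr_right.mp hab
  rw [← Finset.sum_filter_add_sum_filter_not Finset.univ.sym2 (fun p => v₁ ∈ p),
    ← Finset.sum_filter_add_sum_filter_not (Finset.univ.sym2.filter (fun p => ¬ v₁ ∈ p))
      (fun p => v₂ ∈ p), h1, h2, Finset.sum_image inj1, Finset.sum_image inj2,
    Finset.filter_filter]
  ring_nf
  congr 1
  apply Finset.sum_congr
  · apply Finset.filter_congr
    intro p _
    tauto
  · intros; rfl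

lemma move_le {V : Type*} [Fintype V] [DecidableEq V] {k : ℕ}
    (w : Sym2 V → ℕ) (hloopless : ∀ x, w (Sym2.diag x) = 0)
    (v₁ v₂ v₃ : V) (h12 : v₁ ≠ v₂) (h13 : v₁ ≠ v₃) (h23 : v₂ ≠ v₃)
    (hheavy₁ : ∑ y, w s(v₁, y) ≤ w s(v₁, v₂) + 2 * w s(v₁, v₃))
    (hheavy₂ : ∑ y, w s(v₂, y) ≤ w s(v₁, v₂) + 2 * w s(v₂, v₃))
    (c : V → Fin k) (hne : c v₁ ≠ c v₂) :
    mtcWeight w (fun x => if x = v₁ ∨ x = v₂ then c v₃ else c x) ≤ mtcWeight w c := by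
  set c' : V → Fin k := fun x => if x = v₁ ∨ x = v₂ then c v₃ else c x with hc'
  have hc'1 : c' v₁ = c v₃ := by simp [hc']
  have hc'2 : c' v₂ = c v₃ := by simp [hc']
  have hc'3 : c' v₃ = c v₃ := by simp [hc', h13.symm, h23.symm]
  have hc'o : ∀ y, y ≠ v₁ → y ≠ v₂ → c' y = c y := by
    intro y hy1 hy2; simp [hc', hy1, hy2]
  -- the summand
  set f : (V → Fin k) → Sym2 V → ℕ :=
    fun d p => if (Sym2.map d p).IsDiag then 0 else w p with hf
  have hfmk : ∀ (d : V → Fin k) (a b : V), f d s(a, b) = if d a = d b then 0 else w s(a, b) := by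
    intro d a b
    simp [hf, Sym2.map_pair_eq, Sym2.mk_isDiag_iff]
  have hfle : ∀ (d : V → Fin k) (a b : V), f d s(a, b) ≤ w s(a, b) := by
    intro d a b; rw [hfmk]; split <;> omega
  -- row 1
  have row1 : ∑ y, f c' s(v₁, y) ≤ ∑ y, f c s(v₁, y) := by
    by_cases hc13 : c v₁ = c v₃
    · apply Finset.sum_le_sum
      intro y _
      by_cases hy1 : y = v₁
      · subst hy1; rw [hfmk, if_pos rfl]; omega
      by_cases hy2 : y = v₂
      · subst hy2; rw [hfmk, hc'1, hc'2, if_pos rfl]; omega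
      · rw [hfmk, hfmk, hc'1, hc'o y hy1 hy2, ← hc13]
    · -- c v₁ ≠ c v₃
      have hmask : ∑ y, f c' s(v₁, y)
          ≤ ∑ y, (if y ∈ ({v₁, v₂, v₃} : Finset V) then 0 else w s(v₁, y)) := by
        apply Finset.sum_le_sum
        intro y _
        by_cases hy : y ∈ ({v₁, v₂, v₃} : Finset V)
        · rw [if_pos hy]
          simp only [Finset.mem_insert, Finset.mem_singleton] at hy
          rcases hy with rfl | rfl | rfl
          · rw [hfmk, if_pos rfl]
          · rw [hfmk, hc'1, hc'2, if_pos rfl]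
          · rw [hfmk, hc'1, hc'3, if_pos rfl]
        · rw [if_neg hy]; exact hfle _ _ _
      have hsum : ∑ y, (if y ∈ ({v₁, v₂, v₃} : Finset V) then 0 else w s(v₁, y))
          + (w s(v₁, v₂) + w s(v₁, v₃)) = ∑ y, w s(v₁, y) := by
        have e1 : ∀ y : V, w s(v₁, y) =
            (if y ∈ ({v₁, v₂, v₃} : Finset V) then 0 else w s(v₁, y))
            + (if y ∈ ({v₁, v₂, v₃} : Finset V) then w s(v₁, y) else 0) := by
          intro y; split <;> omega
        rw [Finset.sum_congr rfl (fun y _ => e1 y), Finset.sum_add_distrib]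
        congr 1
        rw [Finset.sum_ite_mem, Finset.univ_inter]
        rw [Finset.sum_insert (by simp [h12, h13]), Finset.sum_insert (by simp [h23]),
          Finset.sum_singleton]
        have : w s(v₁, v₁) = 0 := hloopless v₁
        omega
      have hlow : w s(v₁, v₃) ≤ ∑ y, f c s(v₁, y) := by
        have := Finset.single_le_sum (f := fun y => f c s(v₁, y))
          (fun y _ => Nat.zero_le _) (Finset.mem_univ v₃)
        rwa [hfmk, if_neg hc13] at this
      omega
  -- row 2
  have row2 : ∑ y ∈ Finset.univ.erase v₁, f c' s(v₂, y)
      ≤ ∑ y ∈ Finset.univ.erase v₁, f c s(v₂, y) := by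
    by_cases hc23 : c v₂ = c v₃
    · apply Finset.sum_le_sum
      intro y hy
      have hy1 : y ≠ v₁ := (Finset.mem_erase.mp hy).1
      by_cases hy2 : y = v₂
      · subst hy2; rw [hfmk, if_pos rfl]; omega
      · rw [hfmk, hfmk, hc'2, hc'o y hy1 hy2, ← hc23]
    · have hmask : ∑ y ∈ Finset.univ.erase v₁, f c' s(v₂, y)
          ≤ ∑ y, (if y ∈ ({v₁, v₂, v₃} : Finset V) then 0 else w s(v₂, y)) := by
        refine le_trans (Finset.sum_le_sum ?_)
          (Finset.sum_le_sum_of_subset (Finset.subset_univ _))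
        intro y _
        by_cases hy : y ∈ ({v₁, v₂, v₃} : Finset V)
        · rw [if_pos hy]
          simp only [Finset.mem_insert, Finset.mem_singleton] at hy
          rcases hy with rfl | rfl | rfl
          · rw [hfmk, hc'2, hc'1, if_pos rfl]
          · rw [hfmk, if_pos rfl]
          · rw [hfmk, hc'2, hc'3, if_pos rfl]
        · rw [if_neg hy]; exact hfle _ _ _
      have hsum : ∑ y, (if y ∈ ({v₁, v₂, v₃} : Finset V) then 0 else w s(v₂, y))
          + (w s(v₁, v₂) + w s(v₂, v₃)) = ∑ y, w s(v₂, y) := by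
        have e1 : ∀ y : V, w s(v₂, y) =
            (if y ∈ ({v₁, v₂, v₃} : Finset V) then 0 else w s(v₂, y))
            + (if y ∈ ({v₁, v₂, v₃} : Finset V) then w s(v₂, y) else 0) := by
          intro y; split <;> omega
        rw [Finset.sum_congr rfl (fun y _ => e1 y), Finset.sum_add_distrib]
        congr 1
        rw [Finset.sum_ite_mem, Finset.univ_inter]
        rw [Finset.sum_insert (by simp [h12, h13]), Finset.sum_insert (by simp [h23]),
          Finset.sum_singleton]
        have h0 : w s(v₂, v₂) = 0 := hloopless v₂
        have h1 : w s(v₂, v₁) = w s(v₁, v₂) := by rw [Sym2.eq_swap]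
        omega
      have hlow : w s(v₂, v₃) ≤ ∑ y ∈ Finset.univ.erase v₁, f c s(v₂, y) := by
        have := Finset.single_le_sum (f := fun y => f c s(v₂, y))
          (fun y _ => Nat.zero_le _) (Finset.mem_erase.mpr ⟨Ne.symm h13, Finset.mem_univ v₃⟩)
        rwa [hfmk, if_neg hc23] at this
      omega
  -- rest unchanged
  have rest : ∑ p ∈ Finset.univ.sym2 with ¬ (v₁ ∈ p ∨ v₂ ∈ p), f c' p
      = ∑ p ∈ Finset.univ.sym2 with ¬ (v₁ ∈ p ∨ v₂ ∈ p), f c p := by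
    apply Finset.sum_congr rfl
    intro p hp
    obtain ⟨-, hp⟩ := Finset.mem_filter.mp hp
    push_neg at hp
    induction p using Sym2.ind with
    | _ a b =>
      simp only [Sym2.mem_iff, not_or] at hp
      rw [hfmk, hfmk, hc'o a (Ne.symm hp.1.1) (Ne.symm hp.2.1), hc'o b (Ne.symm hp.1.2) (Ne.symm hp.2.2)]
  -- combine
  show ∑ p ∈ Finset.univ.sym2, f c' p ≤ ∑ p ∈ Finset.univ.sym2, f c p
  rw [sym2_split v₁ v₂ h12 (f c'), sym2_split v₁ v₂ h12 (f c), rest]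
  omega

/-- let `v₁, v₂` be non-terminal vertices forming a triangle
with a vertex `v₃`, let `e = (v₁, v₂)`, and suppose
`w(e) + 2 · w(v₁, v₃) ≥ w(E[v₁])` and `w(e) + 2 · w(v₂, v₃) ≥ w(E[v₂])`, where
`w(E[vᵢ])` is the weighted degree of `vᵢ`. Then some minimum multiterminal
cut partition of `G` places `v₁` and `v₂` in the same block. -/
theorem heavy_triangle_same_block
    {V : Type*} [Fintype V] [DecidableEq V] {k : ℕ} (hk : 2 ≤ k)
    (w : Sym2 V → ℕ) (hloopless : ∀ x, w (Sym2.diag x) = 0)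
    (t : Fin k → V) (ht : Function.Injective t)
    (v₁ v₂ v₃ : V) (h12 : v₁ ≠ v₂) (h13 : v₁ ≠ v₃) (h23 : v₂ ≠ v₃)
    (ht₁ : ∀ i, t i ≠ v₁) (ht₂ : ∀ i, t i ≠ v₂)
    (he12 : 0 < w s(v₁, v₂)) (he13 : 0 < w s(v₁, v₃)) (he23 : 0 < w s(v₂, v₃))
    (hheavy₁ : ∑ y, w s(v₁, y) ≤ w s(v₁, v₂) + 2 * w s(v₁, v₃))
    (hheavy₂ : ∑ y, w s(v₂, y) ≤ w s(v₁, v₂) + 2 * w s(v₂, v₃)) :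
    ∃ c : V → Fin k, (∀ i, c (t i) = i) ∧ mtcWeight w c = minMTC w t ∧
      c v₁ = c v₂ := by
  classical
  have hk0 : 0 < k := by omega
  -- a partition respecting the terminals exists
  set c₀ : V → Fin k := fun x => if h : ∃ i, t i = x then h.choose else ⟨0, hk0⟩ with hc₀
  have hc₀t : ∀ i, c₀ (t i) = i := by
    intro i
    have h : ∃ j, t j = t i := ⟨i, rfl⟩
    simp only [hc₀, dif_pos h]
    exact ht h.choose_spec
  have hne : {n | ∃ c : V → Fin k, (∀ i, c (t i) = i) ∧ mtcWeight w c = n}.Nonempty :=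
    ⟨mtcWeight w c₀, c₀, hc₀t, rfl⟩
  obtain ⟨c, hct, hcw⟩ : minMTC w t ∈
      {n | ∃ c : V → Fin k, (∀ i, c (t i) = i) ∧ mtcWeight w c = n} := Nat.sInf_mem hne
  by_cases hcc : c v₁ = c v₂
  · exact ⟨c, hct, hcw, hcc⟩
  · set c' : V → Fin k := fun x => if x = v₁ ∨ x = v₂ then c v₃ else c x with hc'
    have hct' : ∀ i, c' (t i) = i := by
      intro i
      have : ¬ (t i = v₁ ∨ t i = v₂) := by
        rintro (h | h)
        exacts [ht₁ i h, ht₂ i h]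
      simp only [hc', if_neg this]
      exact hct i
    have hle : mtcWeight w c' ≤ mtcWeight w c :=
      move_le w hloopless v₁ v₂ v₃ h12 h13 h23 hheavy₁ hheavy₂ c hcc
    have hge : minMTC w t ≤ mtcWeight w c' := Nat.sInf_le ⟨c', hct', rfl⟩
    refine ⟨c', hct', le_antisymm (hcw ▸ hle) hge, ?_⟩
    simp [hc']
end

section
/- Let c be a multiterminal cut partition of G into blocks indexed by {1, …, k}, and for a non-terminal vertex v in block c(v) define its gain toward block i ≠ c(v) as g_i(v) = w(v, block i) − w(v, block c(v) \ {v}), and g(v) = max_{i ≠ c(v)} g_i(v). Let u, v ∈ V \ T be adjacent non-terminal vertices lying in the same block j, and let i ≠ j be a block attaining the maximum gain for both u and v. If g(u) + g(v) + 2·w(u, v) > 0, then the multiterminal cut partition obtained from c by moving both u and v to block i has weight equal to the weight of c minus (g(u) + g(v) + 2·w(u, v)); in particular its weight is strictly smaller. -/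
/-- `w(v, block i \ {v})` with respect to the partition `c`: the total weight
of edges joining `v` to the vertices of block `i` other than `v` itself. -/
def blockWeight {V : Type*} [Fintype V] [DecidableEq V] {k : ℕ}
    (w : Sym2 V → ℕ) (c : V → Fin k) (v : V) (i : Fin k) : ℕ :=
  ∑ y ∈ Finset.univ.filter (fun y : V => c y = i ∧ y ≠ v), w s(v, y)

/-- The gain `g_i(v) = w(v, block i) − w(v, block c(v) \ {v})` of moving `v`
from its block `c v` to block `i`. -/
def gain {V : Type*} [Fintype V] [DecidableEq V] {k : ℕ}
    (w : Sym2 V → ℕ) (c : V → Fin k) (v : V) (i : Fin k) : ℤ :=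
  (blockWeight w c v i : ℤ) - (blockWeight w c v (c v) : ℤ)

/-! Moving both vertices amounts to moving `u` to block `i` and then `v` to block `i`. Moving a
single vertex `x` to block `l` lowers the cut weight by exactly `g_l(x)`, since only edges at `x`
can change status. Once `u` sits in block `i`, the edge `uv` counts towards block `i` instead of
`v`'s own block, so the gain of `v` towards `i` has grown by `2 w(u, v)`. -/

open Finset

section

variable {V : Type*} [Fintype V] [DecidableEq V] {k : ℕ} (w : Sym2 V → ℕ)

theorem sum_univ_sym2_filter_mem {M : Type*} [AddCommMonoid M] (f : Sym2 V → M) (x : V) :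
    ∑ p ∈ univ.sym2 with x ∈ p, f p = ∑ y, f s(x, y) := by
  have himage : univ.image (fun y => s(x, y)) = {p ∈ (univ : Finset V).sym2 | x ∈ p} := by
    ext p
    simp [Sym2.mem_iff_exists, eq_comm]
  rw [← himage, sum_image fun _ _ _ _ h => Sym2.congr_right.mp h]

theorem blockWeight_eq_sum_erase (c : V → Fin k) (v : V) (m : Fin k) :
    blockWeight w c v m = ∑ y ∈ univ.erase v, if c y = m then w s(v, y) else 0 := by
  rw [blockWeight, ← sum_filter]
  congr 1
  ext y
  simp [and_comm]

theorem blockWeight_update_self (c : V → Fin k) (x : V) (l m : Fin k) :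
    blockWeight w (Function.update c x l) x m = blockWeight w c x m := by
  simp only [blockWeight_eq_sum_erase]
  refine sum_congr rfl fun y hy => ?_
  rw [Function.update_of_ne (ne_of_mem_erase hy)]

theorem blockWeight_eq_ite_add_sum {u v : V} (huv : u ≠ v) (c : V → Fin k) (m : Fin k) :
    blockWeight w c v m = (if c u = m then w s(v, u) else 0)
      + ∑ y ∈ (univ.erase v).erase u, if c y = m then w s(v, y) else 0 := by
  rw [blockWeight_eq_sum_erase, add_sum_erase _ (fun y => if c y = m then w s(v, y) else 0)
    (mem_erase.mpr ⟨huv, mem_univ u⟩)]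

theorem mtcWeight_add_blockWeight_self (c : V → Fin k) (x : V) :
    mtcWeight w c + blockWeight w c x (c x)
      = ∑ p ∈ univ.sym2 with x ∉ p, (if (p.map c).IsDiag then 0 else w p)
        + ∑ y ∈ univ.erase x, w s(x, y) := by
  have hincident : ∑ y, (if c x = c y then 0 else w s(x, y)) + blockWeight w c x (c x)
      = ∑ y ∈ univ.erase x, w s(x, y) := by
    rw [← sum_erase univ (a := x) (by simp), blockWeight_eq_sum_erase, ← sum_add_distrib]
    refine sum_congr rfl fun y _ => ?_
    by_cases h : c y = c x
    · simp [h]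
    · simp [h, Ne.symm h]
  rw [mtcWeight, ← sum_filter_not_add_sum_filter _ (fun p => x ∈ p), sum_univ_sym2_filter_mem,
    add_assoc, ← hincident]
  simp [Sym2.mk_isDiag_iff]

theorem mtcWeight_update (c : V → Fin k) (x : V) (l : Fin k) :
    (mtcWeight w (Function.update c x l) : ℤ) = mtcWeight w c - gain w c x l := by
  have hc := mtcWeight_add_blockWeight_self w c x
  have hupdate := mtcWeight_add_blockWeight_self w (Function.update c x l) x
  have hfar : ∑ p ∈ univ.sym2 with x ∉ p,
        (if (p.map (Function.update c x l)).IsDiag then 0 else w p)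
      = ∑ p ∈ univ.sym2 with x ∉ p, (if (p.map c).IsDiag then 0 else w p) := by
    refine sum_congr rfl fun p hp => ?_
    rw [Sym2.map_congr fun y hy =>
      Function.update_of_ne (ne_of_mem_of_not_mem hy (mem_filter.mp hp).2) _ _]
  rw [Function.update_self, blockWeight_update_self, hfar, ← hc] at hupdate
  rw [gain]
  omega

theorem gain_update_of_eq {u v : V} (huv : u ≠ v) {c : V → Fin k} (hc : c u = c v) {i : Fin k}
    (hi : i ≠ c v) :
    gain w (Function.update c u i) v i = gain w c v i + 2 * w s(u, v) := by
  have hrest : ∀ m, ∑ y ∈ (univ.erase v).erase u,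
      (if Function.update c u i y = m then w s(v, y) else 0)
      = ∑ y ∈ (univ.erase v).erase u, if c y = m then w s(v, y) else 0 :=
    fun m => sum_congr rfl fun y hy => by rw [Function.update_of_ne (ne_of_mem_erase hy)]
  simp only [gain, Function.update_of_ne huv.symm, blockWeight_eq_ite_add_sum w huv, hrest,
    Function.update_self, hc, if_neg hi, if_neg hi.symm, Sym2.eq_swap]
  push_cast
  ring

end

theorem pair_move_gain_general
    {V : Type*} [Fintype V] [DecidableEq V] {k : ℕ}
    (w : Sym2 V → ℕ)
    (t : Fin k → V)
    (c : V → Fin k) (hc : ∀ l, c (t l) = l)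
    (u v : V) (huv : u ≠ v)
    (hut : ∀ l, t l ≠ u) (hvt : ∀ l, t l ≠ v)
    (j : Fin k) (hcu : c u = j) (hcv : c v = j)
    (i : Fin k) (hij : i ≠ j)
    (hpos : 0 < gain w c u i + gain w c v i + 2 * (w s(u, v) : ℤ)) :
    (∀ l, (fun x => if x = u ∨ x = v then i else c x) (t l) = l) ∧
    (mtcWeight w (fun x => if x = u ∨ x = v then i else c x) : ℤ)
      = (mtcWeight w c : ℤ)
        - (gain w c u i + gain w c v i + 2 * (w s(u, v) : ℤ)) ∧
    mtcWeight w (fun x => if x = u ∨ x = v then i else c x) < mtcWeight w c := by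
  have hmove : (fun x => if x = u ∨ x = v then i else c x)
      = Function.update (Function.update c u i) v i := by
    funext x
    by_cases hxv : x = v
    · simp [hxv]
    · by_cases hxu : x = u
      · simp [hxu, huv]
      · simp [hxu, hxv]
  have hweight : (mtcWeight w (fun x => if x = u ∨ x = v then i else c x) : ℤ)
      = (mtcWeight w c : ℤ) - (gain w c u i + gain w c v i + 2 * (w s(u, v) : ℤ)) := by
    rw [hmove, mtcWeight_update, mtcWeight_update,
      gain_update_of_eq w huv (hcu.trans hcv.symm) (hcv ▸ hij)]
    ring
  refine ⟨fun l => by simp [hut l, hvt l, hc l], hweight, ?_⟩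
  omega

/-- let `c` be a multiterminal cut partition, let `u, v` be
adjacent non-terminal vertices in the same block `j`, and let `i ≠ j` be a
block attaining the maximum gain `g(u) = gain u i` and `g(v) = gain v i` for
both `u` and `v`. If `g(u) + g(v) + 2 · w(u,v) > 0`, then moving both `u` and
`v` to block `i` yields a multiterminal cut partition whose weight equals the
weight of `c` minus `g(u) + g(v) + 2 · w(u,v)`; in particular it is strictly
smaller. -/
theorem pair_move_gain
    {V : Type*} [Fintype V] [DecidableEq V] {k : ℕ} (hk : 2 ≤ k)
    (w : Sym2 V → ℕ) (hloopless : ∀ x, w (Sym2.diag x) = 0)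
    (t : Fin k → V) (ht : Function.Injective t)
    (c : V → Fin k) (hc : ∀ l, c (t l) = l)
    (u v : V) (huv : u ≠ v)
    (hut : ∀ l, t l ≠ u) (hvt : ∀ l, t l ≠ v)
    (hadj : 0 < w s(u, v))
    (j : Fin k) (hcu : c u = j) (hcv : c v = j)
    (i : Fin k) (hij : i ≠ j)
    (hmaxu : ∀ l, l ≠ c u → gain w c u l ≤ gain w c u i)
    (hmaxv : ∀ l, l ≠ c v → gain w c v l ≤ gain w c v i)
    (hpos : 0 < gain w c u i + gain w c v i + 2 * (w s(u, v) : ℤ)) :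
    (∀ l, (fun x => if x = u ∨ x = v then i else c x) (t l) = l) ∧
    (mtcWeight w (fun x => if x = u ∨ x = v then i else c x) : ℤ)
      = (mtcWeight w c : ℤ)
        - (gain w c u i + gain w c v i + 2 * (w s(u, v) : ℤ)) ∧
    mtcWeight w (fun x => if x = u ∨ x = v then i else c x) < mtcWeight w c :=
  pair_move_gain_general w t c hc u v huv hut hvt j hcu hcv i hij hpos
end
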